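/- Let g be differentiable, L_g-smooth and μ_g-strongly convex, f convex differentiable L_f-smooth, K linear, and (x⋆, y⋆, z⋆) satisfying 0 = ∇g(x⋆) + K*y⋆ + ∇f(z⋆), z⋆ = x⋆. If x^{k+1} = prox_{η_x g}(x^k - η_x K*y^k - η_x ∇f(z^k)), then (1/(2η_x))‖x^{k+1} - x⋆‖² ≤ (1/(2η_x))‖x^k - x⋆‖² - (μ_g/2)‖x^{k+1} - x⋆‖² - (1/(2L_g))‖∇g(x^{k+1}) - ∇g(x⋆)‖² - (1/(2η_x))‖x^{k+1} - x^k‖² - ⟨K*(y^k - y⋆), x^k - x⋆⟩ - ⟨K*(y^k - y⋆), x^{k+1} - x^k⟩ - ⟨∇f(z^k) - ∇f(z⋆), x^k - x⋆⟩ - ⟨∇f(z^k) - ∇f(z⋆), x^{k+1} - x^k⟩. -/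

import Mathlib

open RealInnerProductSpace

/-!
The prox step is characterised by its first-order condition
`ηx • ∇g(x^{k+1}) = v - x^{k+1}`; subtracting the optimality condition at `(x⋆, y⋆, z⋆)`
expresses `∇g(x^{k+1}) - ∇g(x⋆)` through `x^k - x^{k+1}`, `K*(y^k - y⋆)` and
`∇f(z^k) - ∇f(z⋆)`. Pairing with `x^{k+1} - x⋆`, the three-point identity for
`2⟪x^k - x^{k+1}, x^{k+1} - x⋆⟫` and the bound
`(μ/2)‖x - y‖² + (1/(2L))‖∇g x - ∇g y‖² ≤ ⟪∇g x - ∇g y, x - y⟫` for smooth strongly convex `g`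
give the claim. That bound comes from strong convexity together with the cocoercivity
(Bregman) estimate, which follows from the descent lemma applied at a gradient step.
-/

abbrev Euc (d : ℕ) := EuclideanSpace ℝ (Fin d)

/-- `w = prox_{η g}(v)` for a real-valued `g`. -/
def IsProxR {d : ℕ} (η : ℝ) (g : Euc d → ℝ) (v w : Euc d) : Prop :=
  ∀ u, g w + ‖w - v‖ ^ 2 / (2 * η) ≤ g u + ‖u - v‖ ^ 2 / (2 * η)

theorem IsProxR.gradient_eq {d : ℕ} {η : ℝ} {g : Euc d → ℝ} {v w g'w : Euc d}
    (hw : IsProxR η g v w) (hg : HasGradientAt g g'w w) : g'w = η⁻¹ • (v - w) := by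
  have hmin : IsLocalMin (fun u => g u + ‖u - v‖ ^ 2 * (2 * η)⁻¹) w :=
    Filter.Eventually.of_forall hw
  have hsq : HasFDerivAt (fun u => ‖u - v‖ ^ 2) _ w :=
    ((hasFDerivAt_id w).sub_const v).norm_sq
  have hzero := congrArg (· (g'w - η⁻¹ • (v - w))) <| hmin.hasFDerivAt_eq_zero <|
    hg.hasFDerivAt.add (hsq.mul_const (2 * η)⁻¹)
  simp only [id_eq, ContinuousLinearMap.comp_id, add_apply, InnerProductSpace.toDual_apply_apply,
    smul_apply, innerSL_apply_apply, zero_apply, smul_eq_mul, nsmul_eq_mul, ← neg_sub v w,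
    inner_neg_left] at hzero
  rw [← sub_eq_zero, ← inner_self_eq_zero (𝕜 := ℝ), inner_sub_left, real_inner_smul_left]
  linear_combination hzero

section
variable {E : Type*} [NormedAddCommGroup E] [InnerProductSpace ℝ E] [CompleteSpace E]
  {L μ : ℝ} {g : E → ℝ} {g' : E → E}

theorem le_add_inner_add_half_mul_sq_of_lipschitz_gradient
    (hg : ∀ x, HasGradientAt g (g' x) x) (hL : ∀ x y, ‖g' x - g' y‖ ≤ L * ‖x - y‖) (x y : E) :
    g y ≤ g x + ⟪g' x, y - x⟫ + L / 2 * ‖y - x‖ ^ 2 := by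
  have hline (t : ℝ) :
      HasDerivAt (fun t : ℝ => g (x + t • (y - x))) ⟪g' (x + t • (y - x)), y - x⟫ t := by
    have hγ : HasDerivAt (fun t : ℝ => x + t • (y - x)) (y - x) t := by
      simpa using ((hasDerivAt_id t).smul_const (y - x)).const_add x
    have := (hg _).hasFDerivAt.comp_hasDerivAt t hγ
    simp only [InnerProductSpace.toDual_apply_apply] at this
    exact this
  have hparabola (t : ℝ) :
      HasDerivAt (fun t : ℝ => g x + t * ⟪g' x, y - x⟫ + L / 2 * t ^ 2 * ‖y - x‖ ^ 2)
        (⟪g' x, y - x⟫ + L * t * ‖y - x‖ ^ 2) t := by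
    have := (((hasDerivAt_id t).mul_const ⟪g' x, y - x⟫).const_add (g x)).add
      (((hasDerivAt_pow 2 t).const_mul (L / 2)).mul_const (‖y - x‖ ^ 2))
    exact this.congr_deriv (by simp only [Nat.cast_ofNat]; ring)
  have hslope (t : ℝ) (ht : 0 ≤ t) :
      ⟪g' (x + t • (y - x)), y - x⟫ ≤ ⟪g' x, y - x⟫ + L * t * ‖y - x‖ ^ 2 := by
    have hstep : ‖x + t • (y - x) - x‖ = t * ‖y - x‖ := by
      rw [add_sub_cancel_left, norm_smul, Real.norm_of_nonneg ht]
    calc ⟪g' (x + t • (y - x)), y - x⟫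
        = ⟪g' x, y - x⟫ + ⟪g' (x + t • (y - x)) - g' x, y - x⟫ := by
          rw [inner_sub_left]; ring
      _ ≤ ⟪g' x, y - x⟫ + ‖g' (x + t • (y - x)) - g' x‖ * ‖y - x‖ := by
          gcongr; exact real_inner_le_norm _ _
      _ ≤ ⟪g' x, y - x⟫ + L * (t * ‖y - x‖) * ‖y - x‖ := by
          gcongr; rw [← hstep]; exact hL _ _
      _ = ⟪g' x, y - x⟫ + L * t * ‖y - x‖ ^ 2 := by ring
  have := image_le_of_deriv_right_le_deriv_boundary (a := 0) (b := 1)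
    (fun t _ => (hline t).continuousAt.continuousWithinAt) (fun t _ => (hline t).hasDerivWithinAt)
    (by simp) (fun t _ => (hparabola t).continuousAt.continuousWithinAt)
    (fun t _ => (hparabola t).hasDerivWithinAt) (fun t ht => hslope t ht.1) ⟨zero_le_one, le_rfl⟩
  simpa using this

theorem bregman_ge_of_lipschitz_gradient (hL₀ : 0 < L) (hg : ∀ x, HasGradientAt g (g' x) x)
    (hL : ∀ x y, ‖g' x - g' y‖ ≤ L * ‖x - y‖) (hconv : ∀ x y, g y + ⟪g' y, x - y⟫ ≤ g x)
    (x y : E) :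
    1 / (2 * L) * ‖g' x - g' y‖ ^ 2 ≤ g x - g y - ⟪g' y, x - y⟫ := by
  set D := g' x - g' y
  -- descent lemma at the gradient step from `x`, convexity between that point and `y`
  have hdesc := le_add_inner_add_half_mul_sq_of_lipschitz_gradient hg hL x (x - L⁻¹ • D)
  have hcvx := hconv (x - L⁻¹ • D) y
  have hD : ⟪g' x, D⟫ - ⟪g' y, D⟫ = ‖D‖ ^ 2 := by
    rw [← inner_sub_left, real_inner_self_eq_norm_sq]
  rw [sub_sub_cancel_left, inner_neg_right, norm_neg, real_inner_smul_right, norm_smul,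
    Real.norm_of_nonneg (inv_nonneg.2 hL₀.le)] at hdesc
  rw [sub_right_comm, inner_sub_right, real_inner_smul_right] at hcvx
  have hLL : L * L⁻¹ = 1 := mul_inv_cancel₀ hL₀.ne'
  linear_combination hdesc + hcvx - L⁻¹ * hD + (L⁻¹ * ‖D‖ ^ 2 / 2) * hLL

theorem le_inner_gradient_sub_of_strongConvex_of_lipschitz (hL₀ : 0 < L) (hμ : 0 ≤ μ)
    (hg : ∀ x, HasGradientAt g (g' x) x) (hL : ∀ x y, ‖g' x - g' y‖ ≤ L * ‖x - y‖)
    (hsc : ∀ x y, g y + ⟪g' y, x - y⟫ + μ / 2 * ‖x - y‖ ^ 2 ≤ g x) (x y : E) :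
    μ / 2 * ‖x - y‖ ^ 2 + 1 / (2 * L) * ‖g' x - g' y‖ ^ 2 ≤ ⟪g' x - g' y, x - y⟫ := by
  have hconv (x y : E) : g y + ⟪g' y, x - y⟫ ≤ g x := by
    nlinarith [hsc x y, sq_nonneg ‖x - y‖]
  have hbreg := bregman_ge_of_lipschitz_gradient hL₀ hg hL hconv x y
  have hsc' := hsc y x
  rw [← neg_sub x y, inner_neg_right, norm_neg] at hsc'
  rw [inner_sub_left]
  linarith
end

theorem acv1_primal_descent_smooth_g_general {dx dy : ℕ} (Lg μg ηx : ℝ)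
    (hLg : 0 < Lg) (hμg : 0 ≤ μg) (hηx : 0 < ηx)
    (K : Euc dx →L[ℝ] Euc dy)
    (f' : Euc dx → Euc dx)
    (g : Euc dx → ℝ) (g' : Euc dx → Euc dx)
    (hgdiff : ∀ x, HasGradientAt g (g' x) x)
    (hglip : ∀ x y, ‖g' x - g' y‖ ≤ Lg * ‖x - y‖)
    (hgsc : ∀ x y : Euc dx,
      g y + ⟪g' y, x - y⟫ + (μg / 2) * ‖x - y‖ ^ 2 ≤ g x)
    (xs zs : Euc dx) (ys : Euc dy)
    (hopt : g' xs + (ContinuousLinearMap.adjoint K) ys + f' zs = 0)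
    (xk xk1 zk : Euc dx) (yk : Euc dy)
    (hx : IsProxR ηx g
      (xk - ηx • (ContinuousLinearMap.adjoint K) yk - ηx • f' zk) xk1) :
    (1 / (2 * ηx)) * ‖xk1 - xs‖ ^ 2
      ≤ (1 / (2 * ηx)) * ‖xk - xs‖ ^ 2
        - (μg / 2) * ‖xk1 - xs‖ ^ 2
        - (1 / (2 * Lg)) * ‖g' xk1 - g' xs‖ ^ 2
        - (1 / (2 * ηx)) * ‖xk1 - xk‖ ^ 2
        - ⟪(ContinuousLinearMap.adjoint K) (yk - ys), xk - xs⟫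
        - ⟪(ContinuousLinearMap.adjoint K) (yk - ys), xk1 - xk⟫
        - ⟪f' zk - f' zs, xk - xs⟫
        - ⟪f' zk - f' zs, xk1 - xk⟫ := by
  set Kt := ContinuousLinearMap.adjoint K
  have hgap : g' xk1 - g' xs = ηx⁻¹ • (xk - xk1) - Kt (yk - ys) - (f' zk - f' zs) := by
    rw [hx.gradient_eq (hgdiff xk1), map_sub]
    simp only [smul_sub, inv_smul_smul₀ hηx.ne']
    linear_combination (norm := module) -hopt
  have hsplit (a : Euc dx) : ⟪a, xk - xs⟫ + ⟪a, xk1 - xk⟫ = ⟪a, xk1 - xs⟫ := by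
    rw [← inner_add_right, sub_add_sub_cancel']
  have hpolar : ‖xk - xs‖ ^ 2 = ‖xk1 - xk‖ ^ 2 + 2 * ⟪xk - xk1, xk1 - xs⟫ + ‖xk1 - xs‖ ^ 2 := by
    rw [← sub_add_sub_cancel xk xk1 xs, norm_add_sq_real, norm_sub_rev xk1 xk]
  have hmono := le_inner_gradient_sub_of_strongConvex_of_lipschitz hLg hμg hgdiff hglip hgsc xk1 xs
  have hinner : ⟪g' xk1 - g' xs, xk1 - xs⟫ = ηx⁻¹ * ⟪xk - xk1, xk1 - xs⟫
      - (⟪Kt (yk - ys), xk - xs⟫ + ⟪Kt (yk - ys), xk1 - xk⟫)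
      - (⟪f' zk - f' zs, xk - xs⟫ + ⟪f' zk - f' zs, xk1 - xk⟫) := by
    rw [hgap, inner_sub_left, inner_sub_left, real_inner_smul_left, hsplit, hsplit]
  linear_combination hmono + hinner - (1 / (2 * ηx)) * hpolar

/-- Descent lemma for the primal update of ACV-I when `g` is smooth
and strongly convex. -/
theorem acv1_primal_descent_smooth_g {dx dy : ℕ} (Lf Lg μg ηx : ℝ)
    (hLf : 0 < Lf) (hLg : 0 < Lg) (hμg : 0 ≤ μg) (hηx : 0 < ηx)
    (K : Euc dx →L[ℝ] Euc dy)
    (f : Euc dx → ℝ) (f' : Euc dx → Euc dx)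
    (hfconv : ConvexOn ℝ Set.univ f)
    (hfdiff : ∀ x, HasGradientAt f (f' x) x)
    (hflip : ∀ x y, ‖f' x - f' y‖ ≤ Lf * ‖x - y‖)
    (g : Euc dx → ℝ) (g' : Euc dx → Euc dx)
    (hgdiff : ∀ x, HasGradientAt g (g' x) x)
    (hglip : ∀ x y, ‖g' x - g' y‖ ≤ Lg * ‖x - y‖)
    (hgsc : ∀ x y : Euc dx,
      g y + ⟪g' y, x - y⟫ + (μg / 2) * ‖x - y‖ ^ 2 ≤ g x)
    (xs zs : Euc dx) (ys : Euc dy) (hzx : zs = xs)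
    (hopt : g' xs + (ContinuousLinearMap.adjoint K) ys + f' zs = 0)
    (xk xk1 zk : Euc dx) (yk : Euc dy)
    (hx : IsProxR ηx g
      (xk - ηx • (ContinuousLinearMap.adjoint K) yk - ηx • f' zk) xk1) :
    (1 / (2 * ηx)) * ‖xk1 - xs‖ ^ 2
      ≤ (1 / (2 * ηx)) * ‖xk - xs‖ ^ 2
        - (μg / 2) * ‖xk1 - xs‖ ^ 2
        - (1 / (2 * Lg)) * ‖g' xk1 - g' xs‖ ^ 2
        - (1 / (2 * ηx)) * ‖xk1 - xk‖ ^ 2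
        - ⟪(ContinuousLinearMap.adjoint K) (yk - ys), xk - xs⟫
        - ⟪(ContinuousLinearMap.adjoint K) (yk - ys), xk1 - xk⟫
        - ⟪f' zk - f' zs, xk - xs⟫
        - ⟪f' zk - f' zs, xk1 - xk⟫ :=
  acv1_primal_descent_smooth_g_general Lg μg ηx hLg hμg hηx K f' g g' hgdiff hglip hgsc xs zs ys
    hopt xk xk1 zk yk hx
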